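/- arXiv:2109.13419 — 5 statements merged into one kernel-verified Lean document; each statement's English description precedes it below -/
import Mathlib

section
/- Let $0<\alpha<1$, $0<\beta<1$, $\mu\geq 0$, $\delta_0\geq 0$, $H\geq 1$, $\varepsilon\geq 0$, and suppose nonnegative sequences $(a_k),(\delta_k)$ satisfy $\delta_k\leq\beta^k\delta_0+\mu$ and $a_{k+1}\leq\alpha^H a_k+\frac{2\alpha^H\delta_k+\varepsilon}{1-\alpha}$ for all $k$. Then $a_k \leq \frac{\alpha^{kH}a_0 \cdot(1-\alpha) + 2\alpha^H k\max(\alpha^{H-1},\beta)^{k-1}\delta_0}{1-\alpha} + \frac{2\alpha^H\mu+\varepsilon}{(1-\alpha)(1-\alpha^H)}$ for all $k\geq 1$. -/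
set_option maxHeartbeats 1000000 in
theorem stmt_4 (α β μ δ0 ε : ℝ) (hα0 : 0 < α) (hα1 : α < 1)
    (hβ0 : 0 < β) (hβ1 : β < 1) (hμ : 0 ≤ μ) (hδ0 : 0 ≤ δ0) (hε : 0 ≤ ε)
    (H : ℕ) (hH : 1 ≤ H) (a δ : ℕ → ℝ)
    (ha : ∀ k, 0 ≤ a k) (hδpos : ∀ k, 0 ≤ δ k) (hδ00 : δ 0 = δ0)
    (hδ : ∀ k, δ k ≤ β ^ k * δ0 + μ)
    (hrec : ∀ k, a (k + 1) ≤ α ^ H * a k + (2 * α ^ H * δ k + ε) / (1 - α)) :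
    ∀ k, 1 ≤ k →
      a k ≤ (α ^ (k * H) * a 0 * (1 - α)
              + 2 * α ^ H * (k : ℝ) * max (α ^ (H - 1)) β ^ (k - 1) * δ0) / (1 - α)
        + (2 * α ^ H * μ + ε) / ((1 - α) * (1 - α ^ H)) := by
  set A := α ^ H with hA
  have hA0 : 0 < A := pow_pos hα0 H
  have hA1 : A < 1 := pow_lt_one₀ hα0.le hα1 (by omega)
  have h1α : 0 < 1 - α := by linarith
  have h1A : 0 < 1 - A := by linarith
  set M := max (α ^ (H - 1)) β with hM
  have hM0 : 0 < M := lt_max_of_lt_right hβ0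
  have hβM : β ≤ M := le_max_right _ _
  have hAM : A ≤ M :=
    le_trans (pow_le_pow_of_le_one hα0.le hα1.le (Nat.sub_le H 1)) (le_max_left _ _)
  set C := (2 * A * μ + ε) / ((1 - α) * (1 - A)) with hC
  have hCeq : A * C + (2 * A * μ + ε) * (1 - α)⁻¹ = C := by
    rw [hC]; field_simp; ring
  have key : ∀ k, 1 ≤ k →
      a k ≤ A ^ k * a 0 + 2 * A * (k : ℝ) * M ^ (k - 1) * δ0 * (1 - α)⁻¹ + C := by
    intro k hk
    induction k, hk using Nat.le_induction with
    | base =>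
      have h := hrec 0
      rw [hδ00] at h
      have hε' : ε * (1 - α)⁻¹ ≤ C := by
        rw [hC, ← div_eq_mul_inv, div_le_div_iff₀ h1α (by positivity)]
        nlinarith [mul_nonneg (mul_nonneg hA0.le hμ) h1α.le,
          mul_nonneg (mul_nonneg hε hA0.le) h1α.le]
      have hsplit : (2 * A * δ0 + ε) / (1 - α)
          = 2 * A * δ0 * (1 - α)⁻¹ + ε * (1 - α)⁻¹ := by
        rw [div_eq_mul_inv]; ring
      simp only [pow_one, Nat.sub_self, pow_zero, Nat.cast_one]
      rw [hsplit] at h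
      have : 2 * A * δ0 * (1 - α)⁻¹ = 2 * A * 1 * 1 * δ0 * (1 - α)⁻¹ := by ring
      linarith
    | succ k hk ih =>
      have hk1 : (1:ℝ) ≤ (k:ℝ) := by exact_mod_cast hk
      have hkpos : (0:ℝ) ≤ (k:ℝ) := by positivity
      have hiα : (0:ℝ) < (1 - α)⁻¹ := inv_pos.mpr h1α
      have hMk1 : (0:ℝ) ≤ M ^ (k - 1) := by positivity
      have hpow : M ^ k = M * M ^ (k - 1) := by
        conv_lhs => rw [show k = (k - 1) + 1 by omega]
        rw [pow_succ]; ring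
      have hcoef : A * ((k:ℝ) * M ^ (k - 1)) + β ^ k ≤ ((k:ℝ) + 1) * M ^ k := by
        have h1 : A * M ^ (k - 1) ≤ M ^ k := by rw [hpow]; nlinarith
        have h2 : β ^ k ≤ M ^ k := pow_le_pow_left₀ hβ0.le hβM k
        nlinarith [mul_le_mul_of_nonneg_left h1 hkpos]
      have h := hrec k
      have hδk := hδ k
      have e1 : A * a k
          ≤ A * (A ^ k * a 0 + 2 * A * (k:ℝ) * M ^ (k - 1) * δ0 * (1 - α)⁻¹ + C) :=
        mul_le_mul_of_nonneg_left ih hA0.le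
      have e2 : (2 * A * δ k + ε) * (1 - α)⁻¹
          ≤ (2 * A * (β ^ k * δ0 + μ) + ε) * (1 - α)⁻¹ := by
        apply mul_le_mul_of_nonneg_right _ hiα.le
        nlinarith
      have e3 : 2 * A * δ0 * (1 - α)⁻¹ * (A * ((k:ℝ) * M ^ (k - 1)) + β ^ k)
          ≤ 2 * A * δ0 * (1 - α)⁻¹ * (((k:ℝ) + 1) * M ^ k) :=
        mul_le_mul_of_nonneg_left hcoef (by positivity)
      have hgoal : a (k + 1)
          ≤ A ^ (k + 1) * a 0 + 2 * A * ((k:ℝ) + 1) * M ^ k * δ0 * (1 - α)⁻¹ + C := by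
        rw [pow_succ]
        rw [div_eq_mul_inv] at h
        linarith [e1, e2, e3, h, hCeq]
      rw [show k + 1 - 1 = k from rfl, Nat.cast_add, Nat.cast_one]
      linarith
  intro k hk
  have hk' := key k hk
  have heq : (α ^ (k * H) * a 0 * (1 - α) + 2 * A * (k : ℝ) * M ^ (k - 1) * δ0) / (1 - α)
      = A ^ k * a 0 + 2 * A * (k : ℝ) * M ^ (k - 1) * δ0 * (1 - α)⁻¹ := by
    rw [mul_comm k H, pow_mul, ← hA]
    field_simp
  rw [heq]
  exact hk'
end

section
/- Let $0<\alpha<1$, $0<\beta<1$, $\mu\geq 0$, and suppose nonnegative sequences $(a_k),(\delta_k)$ satisfy $\delta_k\leq\beta^k\delta_0+\mu$ and $a_{k+1}\leq\alpha^H a_k+\frac{2\alpha^H\delta_k+\varepsilon}{1-\alpha}$ for all $k$, where $H\geq 1$ and $\varepsilon\geq 0$. Then $\limsup_{k\to\infty} a_k \leq \frac{2\alpha^H\mu+\varepsilon}{(1-\alpha)(1-\alpha^H)}$. -/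
open Filter

lemma aux_rec (q D : ℝ) (hq : 0 ≤ q) (a : ℕ → ℝ) (k0 : ℕ)
    (h : ∀ n, a (k0 + n + 1) ≤ q * a (k0 + n) + D) :
    ∀ n, a (k0 + n) ≤ q ^ n * a k0 + D * ∑ i ∈ Finset.range n, q ^ i := by
  intro n
  induction n with
  | zero => simp
  | succ n ih =>
    have h1 := h n
    have h2 : q * a (k0 + n) ≤ q * (q ^ n * a k0 + D * ∑ i ∈ Finset.range n, q ^ i) :=
      mul_le_mul_of_nonneg_left ih hq
    have h3 : ∑ i ∈ Finset.range (n + 1), q ^ i = q * ∑ i ∈ Finset.range n, q ^ i + 1 :=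
      geom_sum_succ
    calc a (k0 + (n + 1)) = a (k0 + n + 1) := by ring_nf
      _ ≤ q * a (k0 + n) + D := h1
      _ ≤ q * (q ^ n * a k0 + D * ∑ i ∈ Finset.range n, q ^ i) + D := by linarith
      _ = q ^ (n + 1) * a k0 + D * ∑ i ∈ Finset.range (n + 1), q ^ i := by
          rw [h3]; ring

theorem stmt_5 (α β μ ε : ℝ) (hα0 : 0 < α) (hα1 : α < 1)
    (hβ0 : 0 < β) (hβ1 : β < 1) (hμ : 0 ≤ μ) (hε : 0 ≤ ε)
    (H : ℕ) (hH : 1 ≤ H) (a δ : ℕ → ℝ)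
    (ha : ∀ k, 0 ≤ a k) (hδpos : ∀ k, 0 ≤ δ k)
    (hδ : ∀ k, δ k ≤ β ^ k * δ 0 + μ)
    (hrec : ∀ k, a (k + 1) ≤ α ^ H * a k + (2 * α ^ H * δ k + ε) / (1 - α)) :
    Filter.limsup a Filter.atTop ≤ (2 * α ^ H * μ + ε) / ((1 - α) * (1 - α ^ H)) := by
  set q := α ^ H with hq_def
  have hq0 : 0 < q := pow_pos hα0 H
  have hq1 : q < 1 := pow_lt_one₀ hα0.le hα1 (by omega)
  have h1α : 0 < 1 - α := by linarith
  have h1q : 0 < 1 - q := by linarith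
  have hcobdd : IsCoboundedUnder (· ≤ ·) atTop a :=
    (isBoundedUnder_of ⟨0, fun k => ha k⟩ : IsBoundedUnder (· ≥ ·) atTop a).isCoboundedUnder_le
  set T := (2 * q * μ + ε) / ((1 - α) * (1 - q)) with hT_def
  set C := 2 * q / ((1 - α) * (1 - q)) with hC_def
  have hC0 : 0 ≤ C := by positivity
  -- main claim: ∀ η > 0, limsup ≤ T + C * η + η
  have key : ∀ η : ℝ, 0 < η → limsup a atTop ≤ T + C * η + η := by
    intro η hη
    -- choose k0 with β^k0 * δ 0 ≤ η
    have htend : Tendsto (fun k : ℕ => β ^ k * δ 0) atTop (nhds (0 * δ 0)) :=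
      (tendsto_pow_atTop_nhds_zero_of_lt_one hβ0.le hβ1).mul_const _
    rw [zero_mul] at htend
    obtain ⟨k0, hk0⟩ := (htend.eventually (eventually_le_nhds hη)).exists
    -- recurrence bound after k0
    set D := (2 * q * (μ + η) + ε) / (1 - α) with hD_def
    have hrec' : ∀ n, a (k0 + n + 1) ≤ q * a (k0 + n) + D := by
      intro n
      have hδb : δ (k0 + n) ≤ μ + η := by
        have h1 : β ^ (k0 + n) * δ 0 ≤ β ^ k0 * δ 0 := by
          apply mul_le_mul_of_nonneg_right _ (hδpos 0)
          exact pow_le_pow_of_le_one hβ0.le hβ1.le (by omega)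
        have := hδ (k0 + n)
        linarith
      have := hrec (k0 + n)
      have hdiv : (2 * q * δ (k0 + n) + ε) / (1 - α) ≤ D := by
        apply div_le_div_of_nonneg_right ?_ h1α.le |>.trans_eq rfl
        nlinarith
      linarith
    have hbound := aux_rec q D hq0.le a k0 hrec'
    have hD0 : 0 ≤ D := by
      have : 0 ≤ 2 * q * (μ + η) + ε := by positivity
      positivity
    have hsum : ∀ n, D * ∑ i ∈ Finset.range n, q ^ i ≤ D / (1 - q) := by
      intro n
      have hs : ∑ i ∈ Finset.range n, q ^ i = (1 - q ^ n) / (1 - q) := by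
        rw [geom_sum_eq (by linarith) n]
        rw [div_eq_div_iff (by linarith) (by linarith)]
        ring
      have hqn : 0 ≤ q ^ n := by positivity
      have : ∑ i ∈ Finset.range n, q ^ i ≤ 1 / (1 - q) := by
        rw [hs]
        apply div_le_div_of_nonneg_right _ h1q.le |>.trans_eq rfl
        linarith
      calc D * ∑ i ∈ Finset.range n, q ^ i ≤ D * (1 / (1 - q)) :=
            mul_le_mul_of_nonneg_left this hD0
        _ = D / (1 - q) := by ring
    -- choose n0 so q^n * a k0 ≤ η
    have htend2 : Tendsto (fun n : ℕ => q ^ n * a k0) atTop (nhds 0) := by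
      simpa using (tendsto_pow_atTop_nhds_zero_of_lt_one hq0.le hq1).mul_const (a k0)
    obtain ⟨n0, hn0⟩ := (htend2.eventually (eventually_le_nhds hη)).exists_forall_of_atTop
    have hev : ∀ᶠ k in atTop, a k ≤ D / (1 - q) + η := by
      rw [eventually_atTop]
      refine ⟨k0 + n0, fun k hk => ?_⟩
      obtain ⟨n, rfl⟩ : ∃ n, k = k0 + n := ⟨k - k0, by omega⟩
      have hn : n0 ≤ n := by omega
      have := hbound n
      have := hsum n
      have := hn0 n hn
      linarith
    have hlim : limsup a atTop ≤ D / (1 - q) + η := limsup_le_of_le hcobdd hev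
    have hDT : D / (1 - q) = T + C * η := by
      rw [hD_def, hT_def, hC_def]
      field_simp
      ring
    linarith [hlim, hDT ▸ hlim]
  -- conclude
  have : limsup a atTop ≤ T := by
    apply le_of_forall_pos_le_add
    intro ε' hε'
    have hη : 0 < ε' / (C + 1) := by positivity
    have := key _ hη
    have hCη : C * (ε' / (C + 1)) + ε' / (C + 1) = ε' := by
      field_simp
    linarith
  exact this
end

section
/- Consider the two-state MDP with scalar features $\phi(x_1)=1$, $\phi(x_2)=2$, discount $\alpha$, deterministic rewards $r(x_1)>r(x_2)\geq 0$, where under the followed policy $\mu^b$ both states transition so that an $m$-step rollout from state $x_i$ yields $\hat{J}(i)=\sum_{j=0}^{m-1}\alpha^j r(x_i) + 2\alpha^m\theta_k$ for $i=1,2$. Then the least-squares fit $\theta_{k+1}=\arg\min_\theta\sum_{i=1}^2(\phi(x_i)\theta-\hat{J}(i))^2$ satisfies $\theta_{k+1} = \frac{1}{5}\sum_{j=0}^{m-1}\alpha^j r(x_1) + \frac{2}{5}\sum_{j=0}^{m-1}\alpha^j r(x_2) + \frac{6}{5}\alpha^m\theta_k$, and in particular $\theta_{k+1} > \frac{6}{5}\alpha^m\theta_k$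 whenever $r(x_1),r(x_2)> 0$. -/
theorem stmt_8 (α r1 r2 θk : ℝ) (hα0 : 0 < α) (hα1 : α < 1)
    (m : ℕ) (hm : 1 ≤ m) (hθk : 0 < θk) (hr : r2 < r1) (hr2 : 0 ≤ r2)
    (J1 J2 : ℝ)
    (hJ1 : J1 = (∑ j ∈ Finset.range m, α ^ j) * r1 + 2 * α ^ m * θk)
    (hJ2 : J2 = (∑ j ∈ Finset.range m, α ^ j) * r2 + 2 * α ^ m * θk)
    (θ' : ℝ)
    (hmin : ∀ θ : ℝ, (θ' - J1) ^ 2 + (2 * θ' - J2) ^ 2 ≤ (θ - J1) ^ 2 + (2 * θ - J2) ^ 2) :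
    θ' = 1 / 5 * ((∑ j ∈ Finset.range m, α ^ j) * r1)
        + 2 / 5 * ((∑ j ∈ Finset.range m, α ^ j) * r2)
        + 6 / 5 * α ^ m * θk
      ∧ (0 < r1 → 0 < r2 → 6 / 5 * α ^ m * θk < θ') := by
  have h := hmin ((J1 + 2 * J2) / 5)
  have hθ : θ' = (J1 + 2 * J2) / 5 := by nlinarith [sq_nonneg (θ' - (J1 + 2 * J2) / 5)]
  have hS : (0:ℝ) < ∑ j ∈ Finset.range m, α ^ j := by
    apply Finset.sum_pos (fun j _ => pow_pos hα0 j)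
    exact Finset.nonempty_range_iff.mpr (by omega)
  have hpow : (0:ℝ) < α ^ m := pow_pos hα0 m
  constructor
  · rw [hθ, hJ1, hJ2]; ring
  · intro h1 h2
    rw [hθ, hJ1, hJ2]
    nlinarith [mul_pos hS h1, mul_pos hS h2]
end

section
/- Let $M\in\mathbb{R}^{n\times n}$ with $\|M\|_\infty \leq \delta_{FV}$ (induced sup-norm), let $T_\mu$ be an $\alpha$-contraction in the sup norm with fixed point $J^\mu$, let $T$ be an $\alpha$-contraction with fixed point $J^*$, and let $w\in\mathbb{R}^n$ with $\|w\|_\infty\leq\varepsilon_{PE}$. Suppose $J^\mu \leq J^*$ componentwise and $\|J^*-J^\mu\|_\infty\leq\frac{1}{1-\alpha}$, and let $\delta_{app}\geq\|MJ^\mu - J^\mu\|_\infty$. Then for any $J\in\mathbb{R}^n$ and integers $m\geq 0$, $H\geq 1$: $\|M(T_\mu^m T^{H-1}J + w) - J^\mu\|_\infty \leq \alpha^{m+H-1}\delta_{FV}\|J - J^*\|_\infty + \frac{\alpha^m}{1-\alpha}\delta_{FV} + \delta_{app} + \delta_{FV}\varepsilon_{PE}$. -/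
lemma iter_contract {n : ℕ} {α : ℝ} (hα : 0 ≤ α)
    {F : (Fin n → ℝ) → (Fin n → ℝ)}
    (hF : ∀ J J' : Fin n → ℝ, ‖F J - F J'‖ ≤ α * ‖J - J'‖)
    (k : ℕ) (x y : Fin n → ℝ) :
    ‖F^[k] x - F^[k] y‖ ≤ α ^ k * ‖x - y‖ := by
  induction k with
  | zero => simp
  | succ k ih =>
    rw [Function.iterate_succ_apply', Function.iterate_succ_apply']
    calc ‖F (F^[k] x) - F (F^[k] y)‖ ≤ α * ‖F^[k] x - F^[k] y‖ := hF _ _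
      _ ≤ α * (α ^ k * ‖x - y‖) := by
          exact mul_le_mul_of_nonneg_left ih hα
      _ = α ^ (k + 1) * ‖x - y‖ := by ring

theorem stmt_10 (n : ℕ) (α δFV εPE δapp : ℝ) (hα0 : 0 < α) (hα1 : α < 1)
    (hδFV : 0 ≤ δFV)
    (M : Matrix (Fin n) (Fin n) ℝ)
    (hM : ∀ x : Fin n → ℝ, ‖M.mulVec x‖ ≤ δFV * ‖x‖)
    (T Tμ : (Fin n → ℝ) → (Fin n → ℝ))
    (hT : ∀ J J' : Fin n → ℝ, ‖T J - T J'‖ ≤ α * ‖J - J'‖)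
    (hTμ : ∀ J J' : Fin n → ℝ, ‖Tμ J - Tμ J'‖ ≤ α * ‖J - J'‖)
    (Jstar Jμ : Fin n → ℝ) (hfT : T Jstar = Jstar) (hfTμ : Tμ Jμ = Jμ)
    (w : Fin n → ℝ) (hw : ‖w‖ ≤ εPE)
    (hle : Jμ ≤ Jstar) (hdist : ‖Jstar - Jμ‖ ≤ 1 / (1 - α))
    (happ : ‖M.mulVec Jμ - Jμ‖ ≤ δapp)
    (J : Fin n → ℝ) (m H : ℕ) (hH : 1 ≤ H) :
    ‖M.mulVec (Tμ^[m] (T^[H - 1] J) + w) - Jμ‖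
      ≤ α ^ (m + H - 1) * δFV * ‖J - Jstar‖ + α ^ m / (1 - α) * δFV
        + δapp + δFV * εPE := by
  set x := Tμ^[m] (T^[H - 1] J) with hx
  have hα0' : (0:ℝ) ≤ α := le_of_lt hα0
  -- decomposition
  have hdecomp : M.mulVec (x + w) - Jμ
      = M.mulVec (x - Jμ) + M.mulVec w + (M.mulVec Jμ - Jμ) := by
    rw [Matrix.mulVec_add, Matrix.mulVec_sub]
    abel
  -- bound ‖x - Jμ‖
  have h1 : ‖x - Jμ‖ ≤ α ^ m * ‖T^[H-1] J - Jμ‖ := by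
    have := iter_contract hα0' hTμ m (T^[H-1] J) Jμ
    rwa [Function.iterate_fixed hfTμ] at this
  have h2 : ‖T^[H-1] J - Jμ‖ ≤ ‖T^[H-1] J - Jstar‖ + ‖Jstar - Jμ‖ := by
    have : T^[H-1] J - Jμ = (T^[H-1] J - Jstar) + (Jstar - Jμ) := by abel
    rw [this]; exact norm_add_le _ _
  have h3 : ‖T^[H-1] J - Jstar‖ ≤ α ^ (H-1) * ‖J - Jstar‖ := by
    have := iter_contract hα0' hT (H-1) J Jstar
    rwa [Function.iterate_fixed hfT] at this
  have hxJμ : ‖x - Jμ‖ ≤ α ^ (m + H - 1) * ‖J - Jstar‖ + α ^ m / (1 - α) := by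
    have hpow : α ^ m * α ^ (H - 1) = α ^ (m + H - 1) := by
      rw [← pow_add]
      congr 1
      omega
    calc ‖x - Jμ‖ ≤ α ^ m * ‖T^[H-1] J - Jμ‖ := h1
      _ ≤ α ^ m * (α ^ (H-1) * ‖J - Jstar‖ + ‖Jstar - Jμ‖) := by
          exact mul_le_mul_of_nonneg_left (h2.trans (by linarith)) (pow_nonneg hα0' m)
      _ ≤ α ^ m * (α ^ (H-1) * ‖J - Jstar‖ + 1 / (1 - α)) := by
          have := mul_le_mul_of_nonneg_left hdist (pow_nonneg hα0' m)
          nlinarith [pow_nonneg hα0' m]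
      _ = α ^ (m + H - 1) * ‖J - Jstar‖ + α ^ m / (1 - α) := by
          rw [mul_add, ← mul_assoc, hpow]; ring
  calc ‖M.mulVec (x + w) - Jμ‖
      ≤ ‖M.mulVec (x - Jμ)‖ + ‖M.mulVec w‖ + ‖M.mulVec Jμ - Jμ‖ := by
        rw [hdecomp]; exact (norm_add_le _ _).trans (by gcongr; exact norm_add_le _ _)
    _ ≤ δFV * ‖x - Jμ‖ + δFV * ‖w‖ + δapp := by
        have a1 := hM (x - Jμ); have a2 := hM w; linarith
    _ ≤ δFV * (α ^ (m + H - 1) * ‖J - Jstar‖ + α ^ m / (1 - α)) + δFV * εPE + δapp := by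
        gcongr
    _ = α ^ (m + H - 1) * δFV * ‖J - Jstar‖ + α ^ m / (1 - α) * δFV + δapp + δFV * εPE := by
        ring
end

section
/- Let $T,T_\mu:\mathbb{R}^n\to\mathbb{R}^n$ both be monotone maps satisfying $T(J+ce)=TJ+\alpha c e$ and $T_\mu(J+ce)=T_\mu J+\alpha ce$ for all $J\in\mathbb{R}^n,c\in\mathbb{R}$, with $0<\alpha<1$, $T_\mu J\leq TJ$ for all $J$, fixed points $J^\mu$ of $T_\mu$ and $J^*$ of $T$. Suppose $TJ^\mu\geq J^\mu$ and $\|TJ_k - T_\mu J_k\|_\infty \leq \varepsilon$ where $J_k$ satisfies $\|J_k - J^\mu\|_\infty\leq\delta$. Then $J^{\mu'} \geq T J^\mu - \frac{2\alpha\delta+\varepsilon}{1-\alpha}e$, where $\mu'$ is the policy with $T_{\mu'}J_k = T J_k$ (greedy w.r.t. $J_k$ up to $\varepsilon$) and $J^{\mu'}$ is the fixed point of $T_{\mu'}$, assuming $T_{\mu'}$ is also monotone with the shift property and $\|T_{\mu'}J_k - TJ_k\|_\infty\le\varepsilon$. -/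
/-!
Monotonicity together with the shift property `S (J + c e) = S J + α c e` makes each operator an
`α`-contraction in the sup norm. Hence `T_{μ'} J^μ` is within `2αδ + ε` of `T J^μ` (pass through
`J_k` on both sides), and with `J^μ ≤ T J^μ` this shows that `W = T J^μ - d e`, for
`d = (2αδ + ε)/(1 - α)`, satisfies `W ≤ T_{μ'} W`. Iterating `T_{μ'}` from `W` gives an increasing
sequence converging to its fixed point `J^{μ'}`, so `W ≤ J^{μ'}`.
-/

open Filter Topology Function

variable {ι : Type*}

def ShiftsBy (α : ℝ) (S : (ι → ℝ) → ι → ℝ) : Prop :=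
  ∀ (J : ι → ℝ) (c : ℝ), S (J + c • (1 : ι → ℝ)) = S J + (α * c) • (1 : ι → ℝ)

theorem ShiftsBy.map_sub_smul_one {α : ℝ} {S : (ι → ℝ) → ι → ℝ} (hS : ShiftsBy α S)
    (J : ι → ℝ) (c : ℝ) : S (J - c • (1 : ι → ℝ)) = S J - (α * c) • (1 : ι → ℝ) := by
  simpa [sub_eq_add_neg, neg_smul] using hS J (-c)

variable [Fintype ι]

theorem le_add_smul_one_of_norm_sub_le {J J' : ι → ℝ} {c : ℝ} (h : ‖J - J'‖ ≤ c) :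
    J ≤ J' + c • (1 : ι → ℝ) := fun i => by
  have hi : J i - J' i ≤ c :=
    (le_abs_self _).trans ((norm_le_pi_norm (J - J') i).trans h)
  simp only [Pi.add_apply, Pi.smul_apply, Pi.one_apply, smul_eq_mul, mul_one]
  linarith

theorem sub_smul_one_le_of_norm_sub_le {J J' : ι → ℝ} {c : ℝ} (h : ‖J - J'‖ ≤ c) :
    J' - c • (1 : ι → ℝ) ≤ J :=
  sub_le_iff_le_add.2 (le_add_smul_one_of_norm_sub_le (by rwa [norm_sub_rev]))

namespace ShiftsBy

variable {α : ℝ} {S : (ι → ℝ) → ι → ℝ}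

theorem norm_map_sub_map_le (hS : ShiftsBy α S) (hmono : Monotone S) (hα : 0 ≤ α)
    (J J' : ι → ℝ) : ‖S J - S J'‖ ≤ α * ‖J - J'‖ := by
  have upper : ∀ J J' : ι → ℝ, S J ≤ S J' + (α * ‖J - J'‖) • (1 : ι → ℝ) := fun J J' =>
    hS J' _ ▸ hmono (le_add_smul_one_of_norm_sub_le le_rfl)
  refine (pi_norm_le_iff_of_nonneg (by positivity)).2 fun i => ?_
  have h₁ := upper J J' i
  have h₂ := upper J' J i
  rw [norm_sub_rev J'] at h₂
  simp only [Pi.add_apply, Pi.smul_apply, Pi.one_apply, smul_eq_mul, mul_one] at h₁ h₂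
  rw [Pi.sub_apply, Real.norm_eq_abs, abs_le]
  constructor <;> linarith

theorem norm_iterate_sub_le (hS : ShiftsBy α S) (hmono : Monotone S) (hα : 0 ≤ α)
    {J₀ : ι → ℝ} (hfix : IsFixedPt S J₀) (J : ι → ℝ) (k : ℕ) :
    ‖S^[k] J - J₀‖ ≤ α ^ k * ‖J - J₀‖ := by
  induction k with
  | zero => simp
  | succ k ih =>
    calc ‖S^[k + 1] J - J₀‖ = ‖S (S^[k] J) - S J₀‖ := by rw [iterate_succ_apply', hfix.eq]
      _ ≤ α * ‖S^[k] J - J₀‖ := hS.norm_map_sub_map_le hmono hα _ _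
      _ ≤ α ^ (k + 1) * ‖J - J₀‖ := by
        rw [pow_succ', mul_assoc]; exact mul_le_mul_of_nonneg_left ih hα

theorem tendsto_iterate (hS : ShiftsBy α S) (hmono : Monotone S) (hα₀ : 0 ≤ α) (hα₁ : α < 1)
    {J₀ : ι → ℝ} (hfix : IsFixedPt S J₀) (J : ι → ℝ) :
    Tendsto (fun k => S^[k] J) atTop (𝓝 J₀) := by
  rw [tendsto_iff_norm_sub_tendsto_zero]
  have hgeom : Tendsto (fun k : ℕ => α ^ k * ‖J - J₀‖) atTop (𝓝 0) := by
    simpa using (tendsto_pow_atTop_nhds_zero_of_lt_one hα₀ hα₁).mul_const ‖J - J₀‖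
  exact squeeze_zero (fun _ => norm_nonneg _) (hS.norm_iterate_sub_le hmono hα₀ hfix J) hgeom

theorem le_of_le_map (hS : ShiftsBy α S) (hmono : Monotone S) (hα₀ : 0 ≤ α) (hα₁ : α < 1)
    {J₀ : ι → ℝ} (hfix : IsFixedPt S J₀) {W : ι → ℝ} (hW : W ≤ S W) : W ≤ J₀ :=
  ge_of_tendsto' (hS.tendsto_iterate hmono hα₀ hα₁ hfix W) fun k =>
    hmono.monotone_iterate_of_le_map hW (Nat.zero_le k)

end ShiftsBy

theorem stmt_18_general (n : ℕ) (α δ ε : ℝ) (hα0 : 0 < α) (hα1 : α < 1)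
    (T Tμ' : (Fin n → ℝ) → (Fin n → ℝ))
    (hTshift : ∀ (J : Fin n → ℝ) (c : ℝ),
      T (J + c • (1 : Fin n → ℝ)) = T J + (α * c) • (1 : Fin n → ℝ))
    (hTμ'shift : ∀ (J : Fin n → ℝ) (c : ℝ),
      Tμ' (J + c • (1 : Fin n → ℝ)) = Tμ' J + (α * c) • (1 : Fin n → ℝ))
    (hTmono : ∀ J J' : Fin n → ℝ, J ≤ J' → T J ≤ T J')
    (hTμ'mono : ∀ J J' : Fin n → ℝ, J ≤ J' → Tμ' J ≤ Tμ' J')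
    (Jμ Jμ' : Fin n → ℝ)
    (hfixμ' : Tμ' Jμ' = Jμ')
    (himp : Jμ ≤ T Jμ)
    (Jk : Fin n → ℝ) (hJk : ‖Jk - Jμ‖ ≤ δ)
    (hgreedy2 : ‖Tμ' Jk - T Jk‖ ≤ ε) :
    T Jμ - ((2 * α * δ + ε) / (1 - α)) • (1 : Fin n → ℝ) ≤ Jμ' := by
  set d := (2 * α * δ + ε) / (1 - α)
  have hd : 2 * α * δ + ε + α * d = d := by
    simp only [d]; field_simp [show 1 - α ≠ 0 by linarith]; ring
  have hclose : ‖Tμ' Jμ - T Jμ‖ ≤ 2 * α * δ + ε :=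
    calc ‖Tμ' Jμ - T Jμ‖ ≤ ‖Tμ' Jμ - Tμ' Jk‖ + ‖Tμ' Jk - T Jk‖ + ‖T Jk - T Jμ‖ :=
          by simpa only [dist_eq_norm] using dist_triangle4 (Tμ' Jμ) (Tμ' Jk) (T Jk) (T Jμ)
      _ ≤ α * δ + ε + α * δ := by
        gcongr
        · exact (ShiftsBy.norm_map_sub_map_le hTμ'shift hTμ'mono hα0.le _ _).trans
            (by rw [norm_sub_rev]; gcongr)
        · exact (ShiftsBy.norm_map_sub_map_le hTshift hTmono hα0.le _ _).trans (by gcongr)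
      _ = 2 * α * δ + ε := by ring
  have hW : T Jμ - d • (1 : Fin n → ℝ) ≤ Tμ' (T Jμ - d • (1 : Fin n → ℝ)) := by
    have hlow := (sub_smul_one_le_of_norm_sub_le hclose).trans (hTμ'mono _ _ himp)
    calc T Jμ - d • (1 : Fin n → ℝ) = T Jμ - (2 * α * δ + ε) • 1 - (α * d) • 1 := by
          rw [sub_sub, ← add_smul, hd]
      _ ≤ Tμ' (T Jμ) - (α * d) • 1 := sub_le_sub_right hlow _
      _ = Tμ' (T Jμ - d • 1) := (ShiftsBy.map_sub_smul_one hTμ'shift _ _).symm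
  exact ShiftsBy.le_of_le_map hTμ'shift hTμ'mono hα0.le hα1 hfixμ' hW

theorem stmt_18 (n : ℕ) (α δ ε : ℝ) (hα0 : 0 < α) (hα1 : α < 1)
    (T Tμ Tμ' : (Fin n → ℝ) → (Fin n → ℝ))
    (hTshift : ∀ (J : Fin n → ℝ) (c : ℝ),
      T (J + c • (1 : Fin n → ℝ)) = T J + (α * c) • (1 : Fin n → ℝ))
    (hTμshift : ∀ (J : Fin n → ℝ) (c : ℝ),
      Tμ (J + c • (1 : Fin n → ℝ)) = Tμ J + (α * c) • (1 : Fin n → ℝ))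
    (hTμ'shift : ∀ (J : Fin n → ℝ) (c : ℝ),
      Tμ' (J + c • (1 : Fin n → ℝ)) = Tμ' J + (α * c) • (1 : Fin n → ℝ))
    (hTmono : ∀ J J' : Fin n → ℝ, J ≤ J' → T J ≤ T J')
    (hTμmono : ∀ J J' : Fin n → ℝ, J ≤ J' → Tμ J ≤ Tμ J')
    (hTμ'mono : ∀ J J' : Fin n → ℝ, J ≤ J' → Tμ' J ≤ Tμ' J')
    (hμleT : ∀ J : Fin n → ℝ, Tμ J ≤ T J)
    (Jμ Jstar Jμ' : Fin n → ℝ)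
    (hfixμ : Tμ Jμ = Jμ) (hfixT : T Jstar = Jstar) (hfixμ' : Tμ' Jμ' = Jμ')
    (himp : Jμ ≤ T Jμ)
    (Jk : Fin n → ℝ) (hJk : ‖Jk - Jμ‖ ≤ δ)
    (hgreedy1 : ‖T Jk - Tμ Jk‖ ≤ ε)
    (hgreedy2 : ‖Tμ' Jk - T Jk‖ ≤ ε) :
    T Jμ - ((2 * α * δ + ε) / (1 - α)) • (1 : Fin n → ℝ) ≤ Jμ' :=
  stmt_18_general n α δ ε hα0 hα1 T Tμ' hTshift hTμ'shift hTmono hTμ'mono Jμ Jμ' hfixμ' himp Jk hJk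
    hgreedy2
end
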